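/- Let L > 0 and β > 0. Let u, v : [0,L]² → ℝ be of class C², where u satisfies u(L,y) = 0 for all y ∈ [0,L] and u_y(x,L) = β u_x(x,L), u_y(x,0) = 0 for all x ∈ [0,L], and v satisfies v(0,y) = 0 for all y ∈ [0,L] and v_y(x,L) = −β v_x(x,L), v_y(x,0) = 0 for all x ∈ [0,L]. Then −∫_Ω v(x,y) · (∂ₓ⁻¹ u_yy)(x,y) dx dy = ∫_Ω u(x,y) · ((∂ₓ⁻¹)* v_yy)(x,y) dx dy. -/

import Mathlib

open MeasureTheory Real

noncomputable section

/-- Partial derivative in `x` of `u(x,y)`. -/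
def pdx (u : ℝ → ℝ → ℝ) (x y : ℝ) : ℝ := deriv (fun x' => u x' y) x

/-- Third partial derivative in `x` of `u(x,y)`. -/
def pdx3 (u : ℝ → ℝ → ℝ) (x y : ℝ) : ℝ := iteratedDeriv 3 (fun x' => u x' y) x

/-- Partial derivative in `y` of `u(x,y)`. -/
def pdy (u : ℝ → ℝ → ℝ) (x y : ℝ) : ℝ := deriv (fun y' => u x y') y

/-- Second partial derivative in `y` of `u(x,y)`. -/
def pdy2 (u : ℝ → ℝ → ℝ) (x y : ℝ) : ℝ := iteratedDeriv 2 (fun y' => u x y') y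

/-- The nonlocal operator `(∂ₓ⁻¹ w)(x,y) = -∫ₓ^L w(s,y) ds`. -/
def pxInv (L : ℝ) (w : ℝ → ℝ → ℝ) (x y : ℝ) : ℝ := -(∫ s in x..L, w s y)

/-- The adjoint nonlocal operator `((∂ₓ⁻¹)* w)(x,y) = ∫₀^x w(s,y) ds`. -/
def pxInvStar (w : ℝ → ℝ → ℝ) (x y : ℝ) : ℝ := ∫ s in (0:ℝ)..x, w s y

/-!
For fixed `x` and `s`, two integrations by parts in `y` move `∂_y²` from `u(s, ·)` to `v(x, ·)`,
and the boundary conditions on `y = 0` and `y = L` reduce the boundary terms to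
`β (v(x, L) u_x(s, L) + v_x(x, L) u(s, L))`. Integrating over `s ∈ (x, L)` with `u(L, L) = 0`,
these become `β ∂ₓ(v ∂ₓ⁻¹u)(x, L)`, whose integral over `x ∈ (0, L)` vanishes because
`v(0, L) = 0` and `∂ₓ⁻¹u(L, ·) = 0`. What remains is `∫_Ω v_yy ∂ₓ⁻¹u`, and since `∂ₓ⁻¹` and
`-(∂ₓ⁻¹)*` are adjoint on `(0, L)` (integration by parts in `x`), it equals
`-∫_Ω u (∂ₓ⁻¹)* v_yy`.
-/

open Function Set intervalIntegral

section Slices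

variable {𝕜 E F G : Type*} [NontriviallyNormedField 𝕜]
  [NormedAddCommGroup E] [NormedSpace 𝕜 E] [NormedAddCommGroup F] [NormedSpace 𝕜 F]
  [NormedAddCommGroup G] [NormedSpace 𝕜 G]
  {n : WithTop ℕ∞} {f : E → F → G}

theorem ContDiff.uncurry_left (x : E) (h : ContDiff 𝕜 n (uncurry f)) : ContDiff 𝕜 n (f x) :=
  h.comp (contDiff_const.prodMk contDiff_id)

theorem ContDiff.uncurry_right (y : F) (h : ContDiff 𝕜 n (uncurry f)) :
    ContDiff 𝕜 n fun x => f x y :=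
  h.comp (contDiff_id.prodMk contDiff_const)

end Slices

theorem intervalIntegral_intervalIntegral_swap_of_continuous {E : Type*} [NormedAddCommGroup E]
    [NormedSpace ℝ E] [CompleteSpace E] {F : ℝ → ℝ → E} (hF : Continuous (uncurry F))
    (a b c d : ℝ) :
    ∫ x in a..b, ∫ y in c..d, F x y = ∫ y in c..d, ∫ x in a..b, F x y :=
  intervalIntegral_intervalIntegral_swap <|
    (hF.continuousOn.integrableOn_compact (isCompact_uIcc.prod isCompact_uIcc)).mono_set
      (prod_mono uIoc_subset_uIcc uIoc_subset_uIcc)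

theorem integral_mul_iteratedDeriv_two_eq {f g : ℝ → ℝ} (hf : ContDiff ℝ 2 f)
    (hg : ContDiff ℝ 2 g) (a b : ℝ) :
    ∫ y in a..b, f y * iteratedDeriv 2 g y
      = f b * deriv g b - f a * deriv g a - (deriv f b * g b - deriv f a * g a)
        + ∫ y in a..b, iteratedDeriv 2 f y * g y := by
  have hderiv2 : ∀ {h : ℝ → ℝ}, ContDiff ℝ 2 h → ∀ y,
      HasDerivAt (deriv h) (iteratedDeriv 2 h y) y :=
    fun hh y => by
      rw [iteratedDeriv_succ, iteratedDeriv_one]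
      exact (hh.differentiable_deriv_two y).hasDerivAt
  have hderiv : ∀ {h : ℝ → ℝ}, ContDiff ℝ 2 h → ∀ y, HasDerivAt h (deriv h y) y :=
    fun hh y => (hh.differentiable two_ne_zero y).hasDerivAt
  rw [integral_mul_deriv_eq_deriv_mul (fun y _ => hderiv hf y) (fun y _ => hderiv2 hg y)
      ((hf.continuous_deriv one_le_two).intervalIntegrable _ _)
      ((hg.continuous_iteratedDeriv 2 le_rfl).intervalIntegrable _ _),
    integral_mul_deriv_eq_deriv_mul (fun y _ => hderiv2 hf y) (fun y _ => hderiv hg y)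
      ((hf.continuous_iteratedDeriv 2 le_rfl).intervalIntegrable _ _)
      ((hg.continuous_deriv one_le_two).intervalIntegrable _ _)]
  ring

section PartialDerivatives

variable {u : ℝ → ℝ → ℝ}

theorem hasDerivAt_pdx (hu : Differentiable ℝ (uncurry u)) (x y : ℝ) :
    HasDerivAt (u · y) (pdx u x y) x :=
  (hu.comp (differentiable_id.prodMk (differentiable_const y)) x).hasDerivAt

theorem pdy_eq_fderiv (hu : Differentiable ℝ (uncurry u)) (x y : ℝ) :
    pdy u x y = fderiv ℝ (uncurry u) (x, y) (0, 1) :=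
  ((hu (x, y)).hasFDerivAt.comp_hasDerivAt y
    ((hasDerivAt_const y x).prodMk (hasDerivAt_id y))).deriv

theorem ContDiff.uncurry_pdy {m n : WithTop ℕ∞} (hu : ContDiff ℝ n (uncurry u))
    (hmn : m + 1 ≤ n) : ContDiff ℝ m (uncurry (pdy u)) := by
  have hu1 : Differentiable ℝ (uncurry u) :=
    hu.differentiable (ne_of_gt (lt_of_lt_of_le (by simp) hmn))
  have h : uncurry (pdy u) = fun p => fderiv ℝ (uncurry u) p (0, 1) :=
    funext fun p => pdy_eq_fderiv hu1 p.1 p.2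
  rw [h]
  exact (hu.fderiv_right hmn).clm_apply contDiff_const

theorem pdy_pdy : pdy (pdy u) = pdy2 u := by
  ext x y
  simp only [pdy, pdy2, iteratedDeriv_succ, iteratedDeriv_zero]

theorem ContDiff.continuous_uncurry_pdy2 (hu : ContDiff ℝ 2 (uncurry u)) :
    Continuous (uncurry (pdy2 u)) := by
  rw [← pdy_pdy]
  exact ((hu.uncurry_pdy (m := 1) (by norm_num)).uncurry_pdy (m := 0) (by norm_num)).continuous

end PartialDerivatives

section NonlocalOperators

variable {L : ℝ} {w : ℝ → ℝ → ℝ}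

theorem pxInv_eq_integral (x y : ℝ) : pxInv L w x y = ∫ s in L..x, w s y := by
  rw [pxInv, integral_symm, neg_neg]

@[simp] theorem pxInv_self (y : ℝ) : pxInv L w L y = 0 := by simp [pxInv]

@[simp] theorem pxInvStar_zero (y : ℝ) : pxInvStar w 0 y = 0 := by simp [pxInvStar]

theorem hasDerivAt_pxInv {y : ℝ} (hw : Continuous (w · y)) (x : ℝ) :
    HasDerivAt (pxInv L w · y) (w x y) x := by
  simpa only [pxInv_eq_integral] using (hw.integral_hasStrictDerivAt L x).hasDerivAt

theorem hasDerivAt_pxInvStar {y : ℝ} (hw : Continuous (w · y)) (x : ℝ) :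
    HasDerivAt (pxInvStar w · y) (w x y) x :=
  (hw.integral_hasStrictDerivAt 0 x).hasDerivAt

theorem continuous_pxInv (hw : Continuous (uncurry w)) : Continuous (uncurry (pxInv L w)) := by
  simp only [uncurry_def, pxInv_eq_integral]
  exact continuous_parametric_intervalIntegral_of_continuous (μ := volume)
    (f := fun p s => w s p.2)
    (hw.comp₂ continuous_snd (continuous_snd.comp continuous_fst)) continuous_fst

theorem continuous_pxInvStar (hw : Continuous (uncurry w)) : Continuous (uncurry (pxInvStar w)) :=
  continuous_parametric_intervalIntegral_of_continuous (μ := volume) (f := fun p s => w s p.2)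
    (hw.comp₂ continuous_snd (continuous_snd.comp continuous_fst)) continuous_fst

theorem integral_mul_pxInv {f g : ℝ → ℝ → ℝ} {y : ℝ} (hf : Continuous (f · y))
    (hg : Continuous (g · y)) :
    ∫ x in 0..L, f x y * pxInv L g x y = -∫ x in 0..L, pxInvStar f x y * g x y := by
  rw [integral_mul_deriv_eq_deriv_mul (fun x _ => hasDerivAt_pxInvStar hf x)
    (fun x _ => hasDerivAt_pxInv (L := L) hg x) (hf.intervalIntegrable _ _)
    (hg.intervalIntegrable _ _)]
  simp

end NonlocalOperators

section BoundaryConditions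

variable {L β : ℝ} {u v : ℝ → ℝ → ℝ}

theorem integral_mul_pdy2_of_boundary (hu : ContDiff ℝ 2 (uncurry u))
    (hv : ContDiff ℝ 2 (uncurry v)) {x s : ℝ}
    (hus : pdy u s L = β * pdx u s L ∧ pdy u s 0 = 0)
    (hvx : pdy v x L = -β * pdx v x L ∧ pdy v x 0 = 0) :
    ∫ y in 0..L, v x y * pdy2 u s y
      = β * (v x L * pdx u s L + pdx v x L * u s L) + ∫ y in 0..L, pdy2 v x y * u s y := by
  have green := integral_mul_iteratedDeriv_two_eq (hv.uncurry_left x) (hu.uncurry_left s) 0 L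
  simp only [pdy] at hus hvx
  simp only [pdy2]
  rw [green, hus.1, hus.2, hvx.1, hvx.2]
  ring

theorem integral_mul_pxInv_pdy2 (hu : ContDiff ℝ 2 (uncurry u))
    (hv : ContDiff ℝ 2 (uncurry v)) (huLL : u L L = 0)
    (huby : ∀ s ∈ Icc 0 L, pdy u s L = β * pdx u s L ∧ pdy u s 0 = 0)
    {x : ℝ} (hx : x ∈ Icc 0 L)
    (hvx : pdy v x L = -β * pdx v x L ∧ pdy v x 0 = 0) :
    ∫ y in 0..L, v x y * pxInv L (pdy2 u) x y
      = β * (pdx v x L * pxInv L u x L + v x L * u x L)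
        + ∫ y in 0..L, pdy2 v x y * pxInv L u x y := by
  have hU : Continuous fun p : ℝ × ℝ => u p.1 p.2 := hu.continuous
  have hU2 : Continuous fun p : ℝ × ℝ => pdy2 u p.1 p.2 := hu.continuous_uncurry_pdy2
  have hVyy : Continuous (pdy2 v x) := (hv.uncurry_left x).continuous_iteratedDeriv 2 le_rfl
  have hUx : Continuous (pdx u · L) := (hu.uncurry_right L).continuous_deriv one_le_two
  have ftc : ∫ s in x..L, pdx u s L = -u x L := by
    simp only [pdx]
    rw [integral_deriv_eq_sub' _ rfl (fun s _ => ((hu.uncurry_right L).differentiable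
      two_ne_zero s)) hUx.continuousOn, huLL, zero_sub]
  calc ∫ y in 0..L, v x y * pxInv L (pdy2 u) x y
      = -∫ s in x..L, ∫ y in 0..L, v x y * pdy2 u s y := by
        simp only [pxInv, mul_neg, intervalIntegral.integral_neg,
          ← intervalIntegral.integral_const_mul]
        rw [intervalIntegral_intervalIntegral_swap_of_continuous (by fun_prop)]
    _ = -∫ s in x..L, (β * v x L * pdx u s L + β * pdx v x L * u s L
          + ∫ y in 0..L, pdy2 v x y * u s y) := by
        congr 1
        refine integral_congr fun s hs => ?_
        rw [uIcc_of_le hx.2] at hs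
        exact (integral_mul_pdy2_of_boundary hu hv (huby s ⟨hx.1.trans hs.1, hs.2⟩) hvx).trans
          (by ring)
    _ = _ := by
        rw [intervalIntegral.integral_add (by apply Continuous.intervalIntegrable; fun_prop)
            (by apply Continuous.intervalIntegrable; fun_prop),
          intervalIntegral.integral_add (by apply Continuous.intervalIntegrable; fun_prop)
            (by apply Continuous.intervalIntegrable; fun_prop),
          intervalIntegral.integral_const_mul, intervalIntegral.integral_const_mul, ftc,
          intervalIntegral_intervalIntegral_swap_of_continuous (by fun_prop)]
        simp only [pxInv, mul_neg, intervalIntegral.integral_neg,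
          intervalIntegral.integral_const_mul]
        ring

theorem integral_pdx_mul_pxInv_add_mul_eq_zero (hu : Continuous (uncurry u))
    (hv : ContDiff ℝ 1 (uncurry v)) {y : ℝ} (hv0 : v 0 y = 0) :
    ∫ x in 0..L, (pdx v x y * pxInv L u x y + v x y * u x y) = 0 := by
  have hT : Continuous fun p : ℝ × ℝ => pxInv L u p.1 p.2 := continuous_pxInv hu
  have hVx : Continuous (pdx v · y) := (hv.uncurry_right y).continuous_deriv le_rfl
  rw [integral_eq_sub_of_hasDerivAt (f := fun x => v x y * pxInv L u x y)
    (fun x _ => (hasDerivAt_pdx (hv.differentiable one_ne_zero) x y).mul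
      (hasDerivAt_pxInv (hu.uncurry_right y) x))
    (by apply Continuous.intervalIntegrable; fun_prop)]
  simp [hv0]

end BoundaryConditions

theorem kp_nonlocal_duality_general (L β : ℝ) (hL : 0 < L)
    (u v : ℝ → ℝ → ℝ)
    (hu : ContDiff ℝ 2 (fun p : ℝ × ℝ => u p.1 p.2))
    (hv : ContDiff ℝ 2 (fun p : ℝ × ℝ => v p.1 p.2))
    (hubx : ∀ y ∈ Set.Icc (0:ℝ) L, u L y = 0)
    (huby : ∀ x ∈ Set.Icc (0:ℝ) L, pdy u x L = β * pdx u x L ∧ pdy u x 0 = 0)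
    (hvbx : ∀ y ∈ Set.Icc (0:ℝ) L, v 0 y = 0)
    (hvby : ∀ x ∈ Set.Icc (0:ℝ) L, pdy v x L = -β * pdx v x L ∧ pdy v x 0 = 0) :
    -(∫ x in (0:ℝ)..L, ∫ y in (0:ℝ)..L, v x y * pxInv L (pdy2 u) x y)
      = ∫ x in (0:ℝ)..L, ∫ y in (0:ℝ)..L, u x y * pxInvStar (pdy2 v) x y := by
  have hLL : L ∈ Icc 0 L := right_mem_Icc.2 hL.le
  have hU : Continuous fun p : ℝ × ℝ => u p.1 p.2 := hu.continuous
  have hV2 : Continuous fun p : ℝ × ℝ => pdy2 v p.1 p.2 := hv.continuous_uncurry_pdy2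
  have hT : Continuous fun p : ℝ × ℝ => pxInv L u p.1 p.2 := continuous_pxInv hu.continuous
  have hS : Continuous fun p : ℝ × ℝ => pxInvStar (pdy2 v) p.1 p.2 := continuous_pxInvStar hV2
  have hVx : Continuous (pdx v · L) := (hv.uncurry_right L).continuous_deriv one_le_two
  calc -(∫ x in 0..L, ∫ y in 0..L, v x y * pxInv L (pdy2 u) x y)
      = -∫ x in 0..L, (β * (pdx v x L * pxInv L u x L + v x L * u x L)
          + ∫ y in 0..L, pdy2 v x y * pxInv L u x y) := by
        congr 1
        refine integral_congr fun x hx => ?_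
        rw [uIcc_of_le hL.le] at hx
        exact integral_mul_pxInv_pdy2 hu hv (hubx L hLL) huby hx (hvby x hx)
    _ = -∫ y in 0..L, ∫ x in 0..L, pdy2 v x y * pxInv L u x y := by
        rw [intervalIntegral.integral_add (by apply Continuous.intervalIntegrable; fun_prop)
          (by apply Continuous.intervalIntegrable; fun_prop), intervalIntegral.integral_const_mul,
          integral_pdx_mul_pxInv_add_mul_eq_zero hu.continuous (hv.of_le one_le_two) (hvbx L hLL),
          mul_zero, zero_add,
          intervalIntegral_intervalIntegral_swap_of_continuous (by fun_prop)]
    _ = ∫ y in 0..L, ∫ x in 0..L, u x y * pxInvStar (pdy2 v) x y := by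
        rw [← intervalIntegral.integral_neg]
        refine integral_congr fun y _ => ?_
        rw [integral_mul_pxInv (hV2.uncurry_right (f := pdy2 v) y) (hU.uncurry_right y), neg_neg]
        exact integral_congr fun x _ => mul_comm _ _
    _ = ∫ x in 0..L, ∫ y in 0..L, u x y * pxInvStar (pdy2 v) x y :=
        (intervalIntegral_intervalIntegral_swap_of_continuous (by fun_prop) _ _ _ _).symm

/-- Duality identity for the nonlocal term of the KP-II operator under the closed-loop
and adjoint boundary conditions:
`-∫_Ω v · (∂ₓ⁻¹ u_yy) = ∫_Ω u · ((∂ₓ⁻¹)* v_yy)`. -/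
theorem kp_nonlocal_duality (L β : ℝ) (hL : 0 < L) (hβ : 0 < β)
    (u v : ℝ → ℝ → ℝ)
    (hu : ContDiff ℝ 2 (fun p : ℝ × ℝ => u p.1 p.2))
    (hv : ContDiff ℝ 2 (fun p : ℝ × ℝ => v p.1 p.2))
    (hubx : ∀ y ∈ Set.Icc (0:ℝ) L, u L y = 0)
    (huby : ∀ x ∈ Set.Icc (0:ℝ) L, pdy u x L = β * pdx u x L ∧ pdy u x 0 = 0)
    (hvbx : ∀ y ∈ Set.Icc (0:ℝ) L, v 0 y = 0)
    (hvby : ∀ x ∈ Set.Icc (0:ℝ) L, pdy v x L = -β * pdx v x L ∧ pdy v x 0 = 0) :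
    -(∫ x in (0:ℝ)..L, ∫ y in (0:ℝ)..L, v x y * pxInv L (pdy2 u) x y)
      = ∫ x in (0:ℝ)..L, ∫ y in (0:ℝ)..L, u x y * pxInvStar (pdy2 v) x y :=
  kp_nonlocal_duality_general L β hL u v hu hv hubx huby hvbx hvby

end
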